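/- arXiv:1802.03950 — 6 statements merged into one kernel-verified Lean document; each statement's English description precedes it below -/
import Mathlib

section
/- Let (E, <, #) be a finite prime event structure in which every local configuration [e] is a configuration, and let p : E → ℕ be a thread labelling such that any two distinct events e, e' with p(e) = p(e') satisfy e < e' or e' < e or e # e'. For an event e' and a thread i, if [e'] contains events of thread i, then these events are totally ordered by <, and we write tmax(e', i) for their <-greatest element. Then for any two events e, e' with p(e) = i, p(e') = i' and i ≠ i': e < e' holds if and only if [e'] contains some event of thread i and e ≤ tmax(e', i). -/
/-- A configuration of a prime event structure: causally closed and conflict-free. -/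
def IsConfig {E : Type*} (lt cfl : E → E → Prop) (C : Set E) : Prop :=
  (∀ e ∈ C, ∀ e', lt e' e → e' ∈ C) ∧ ∀ e ∈ C, ∀ e' ∈ C, ¬ cfl e e'

/-- The local configuration [e] := ⌈e⌉ ∪ {e} of an event. -/
def locC {E : Type*} (lt : E → E → Prop) (e : E) : Set E := {e' | lt e' e ∨ e' = e}

/-!
Within [e'] no two events conflict, so the thread axiom makes the events of thread `p e` in [e']
a finite chain for `<`; its top element is tmax(e', p e). If e < e', then e lies in that chain,
hence e ≤ tmax. Conversely tmax ≤ e' and tmax ≠ e' because the threads differ, so e ≤ tmax < e'.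
-/

theorem Finset.exists_forall_eq_or_rel_of_pairwise {α : Type*} {r : α → α → Prop}
    [IsTrans α r] {s : Finset α} (hs : s.Nonempty)
    (htot : (s : Set α).Pairwise fun x y => r x y ∨ r y x) :
    ∃ m ∈ s, ∀ x ∈ s, x = m ∨ r x m := by
  induction hs using Finset.Nonempty.cons_induction with
  | singleton a => exact ⟨a, mem_singleton_self a, fun x hx => .inl (mem_singleton.mp hx)⟩
  | cons a s ha hs ih =>
    rw [coe_cons, Set.pairwise_insert] at htot
    obtain ⟨m, hm, hmax⟩ := ih htot.1
    rcases (htot.2 m hm (ne_of_mem_of_not_mem hm ha).symm).1 with ham | hma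
    · refine ⟨m, mem_cons_of_mem hm, fun x hx => ?_⟩
      rcases mem_cons.mp hx with rfl | hx
      exacts [.inr ham, hmax x hx]
    · refine ⟨a, mem_cons_self a s, fun x hx => ?_⟩
      rcases mem_cons.mp hx with rfl | hx
      · exact .inl rfl
      · rcases hmax x hx with rfl | hxm
        exacts [.inr hma, .inr (_root_.trans_of r hxm hma)]

theorem Set.Finite.exists_forall_eq_or_rel_of_pairwise {α : Type*} {r : α → α → Prop}
    [IsTrans α r] {s : Set α} (hfin : s.Finite) (hs : s.Nonempty)
    (htot : s.Pairwise fun x y => r x y ∨ r y x) :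
    ∃ m ∈ s, ∀ x ∈ s, x = m ∨ r x m := by
  lift s to Finset α using hfin
  exact Finset.exists_forall_eq_or_rel_of_pairwise (Finset.coe_nonempty.mp hs) htot

section EventStructure

variable {E : Type*} {lt cfl : E → E → Prop} {e' : E}

theorem lt_of_mem_locC_of_ne {m : E} (hm : m ∈ locC lt e') (hne : m ≠ e') : lt m e' :=
  hm.resolve_right hne

theorem pairwise_comparable_thread_locC (hloc : IsConfig lt cfl (locC lt e')) (p : E → ℕ)
    (hthread : ∀ e e', e ≠ e' → p e = p e' → lt e e' ∨ lt e' e ∨ cfl e e') (i : ℕ) :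
    {x | x ∈ locC lt e' ∧ p x = i}.Pairwise fun x y => lt x y ∨ lt y x := by
  rintro x ⟨hx, rfl⟩ y ⟨hy, hpy⟩ hxy
  rcases hthread x y hxy hpy.symm with h | h | h
  exacts [.inl h, .inr h, absurd h (hloc.2 x hx y hy)]

end EventStructure

theorem stmt4_general {E : Type*} [Finite E] (lt cfl : E → E → Prop)
    (hTrans : Transitive lt)
    (hloc : ∀ e, IsConfig lt cfl (locC lt e))
    (p : E → ℕ)
    (hthread : ∀ e e', e ≠ e' → p e = p e' → lt e e' ∨ lt e' e ∨ cfl e e')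
    (e e' : E) (hne : p e ≠ p e') :
    lt e e' ↔
      ∃ m ∈ locC lt e', p m = p e ∧
        (∀ m' ∈ locC lt e', p m' = p e → m' = m ∨ lt m' m) ∧
        (e = m ∨ lt e m) := by
  have : IsTrans E lt := ⟨fun _ _ _ => @hTrans _ _ _⟩
  constructor
  · intro hee'
    have he : e ∈ {x | x ∈ locC lt e' ∧ p x = p e} := ⟨.inl hee', rfl⟩
    obtain ⟨m, ⟨hm, hpm⟩, hmax⟩ := (Set.toFinite _).exists_forall_eq_or_rel_of_pairwise ⟨e, he⟩
      (pairwise_comparable_thread_locC (hloc e') p hthread (p e))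
    exact ⟨m, hm, hpm, fun m' hm' hpm' => hmax m' ⟨hm', hpm'⟩, hmax e he⟩
  · rintro ⟨m, hm, hpm, -, hem⟩
    have hme' : lt m e' := lt_of_mem_locC_of_ne hm (fun h => hne (h ▸ hpm).symm)
    exact hem.elim (· ▸ hme') (hTrans · hme')

/-- In a finite PES where every local configuration is a configuration, with a
thread labelling p such that distinct events of the same thread are causally
related or in conflict, for events e, e' of distinct threads:
e < e' iff [e'] contains some event of thread p(e) and e ≤ tmax(e', p(e)),
where tmax(e', i) is the <-greatest event of thread i in [e']. -/
theorem stmt4 {E : Type*} [Finite E] (lt cfl : E → E → Prop)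
    (hTrans : Transitive lt) (hIrrefl : ∀ e, ¬ lt e e)
    (hSymm : Symmetric cfl) (hCIrrefl : ∀ e, ¬ cfl e e)
    (hloc : ∀ e, IsConfig lt cfl (locC lt e))
    (p : E → ℕ)
    (hthread : ∀ e e', e ≠ e' → p e = p e' → lt e e' ∨ lt e' e ∨ cfl e e')
    (e e' : E) (hne : p e ≠ p e') :
    lt e e' ↔
      ∃ m ∈ locC lt e', p m = p e ∧
        (∀ m' ∈ locC lt e', p m' = p e → m' = m ∨ lt m' m) ∧
        (e = m ∨ lt e m) :=
  stmt4_general lt cfl hTrans hloc p hthread e e' hne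
end

section
/- Let (E, <, #) be a finite prime event structure with inherited conflict in which every local configuration [e] is a configuration. Let L be a set of locks and λ : E → L ∪ {⊥} a partial lock labelling such that: (i) whenever two events are in immediate conflict, both carry the same lock label l ∈ L; and (ii) any two distinct events carrying the same lock label l ∈ L satisfy e < e' or e' < e or e # e'. For an event e and a lock l, if [e] contains events labelled l, then these events are totally ordered by <, and we write lmax(e, l) for their <-greatest element. Then for any two events e, e': e # e' holds if and only if there exists some l ∈ L such that lmax(e, l) and lmax(e', l) are both defined and lmax(e, l) # lmax(e', l). -/
/-- The history ⌈e⌉ of an event. -/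
def histSet {E : Type*} (lt : E → E → Prop) (e : E) : Set E := {e' | lt e' e}

/-- A set of events is conflict-free. -/
def CflFree {E : Type*} (cfl : E → E → Prop) (S : Set E) : Prop :=
  ∀ a ∈ S, ∀ b ∈ S, ¬ cfl a b

/-- Two events are in immediate conflict: they are in conflict and both
⌈e⌉ ∪ [e'] and [e] ∪ ⌈e'⌉ are conflict-free. -/
def ImmCfl {E : Type*} (lt cfl : E → E → Prop) (e e' : E) : Prop :=
  cfl e e' ∧ CflFree cfl (histSet lt e ∪ locC lt e') ∧
    CflFree cfl (locC lt e ∪ histSet lt e')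

/-- `m` is `lmax(e, l)`: the causally greatest `l`-labelled event of `[e]`. -/
def IsLockMax {E L : Type*} (lt : E → E → Prop) (lab : E → Option L) (e : E) (l : L)
    (m : E) : Prop :=
  m ∈ locC lt e ∧ lab m = some l ∧ ∀ a ∈ locC lt e, lab a = some l → a = m ∨ lt a m

section LocalConfiguration

variable {E : Type*} {lt cfl : E → E → Prop}

lemma mem_locC_self (e : E) : e ∈ locC lt e := Or.inr rfl

lemma locC_subset_of_mem (hTrans : Transitive lt) {a d : E} (h : a ∈ locC lt d) :
    locC lt a ⊆ locC lt d := by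
  rintro x (hx | rfl)
  · rcases h with h | rfl
    · exact Or.inl (hTrans hx h)
    · exact Or.inl hx
  · exact h

lemma locC_ssubset_of_lt (hTrans : Transitive lt) (hIrrefl : ∀ e, ¬ lt e e) {a d : E}
    (h : lt a d) : locC lt a ⊂ locC lt d := by
  refine ⟨locC_subset_of_mem hTrans (Or.inl h), fun hsub => ?_⟩
  rcases hsub (mem_locC_self d) with hd | rfl
  · exact hIrrefl a (hTrans h hd)
  · exact hIrrefl _ h

lemma ncard_locC_lt_ncard_of_lt [Finite E] (hTrans : Transitive lt)
    (hIrrefl : ∀ e, ¬ lt e e) {a d : E} (h : lt a d) :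
    (locC lt a).ncard < (locC lt d).ncard :=
  Set.ncard_lt_ncard (locC_ssubset_of_lt hTrans hIrrefl h) (Set.toFinite _)

lemma ncard_locC_le_ncard_of_mem [Finite E] (hTrans : Transitive lt) {a d : E}
    (h : a ∈ locC lt d) : (locC lt a).ncard ≤ (locC lt d).ncard :=
  Set.ncard_le_ncard (locC_subset_of_mem hTrans h) (Set.toFinite _)

lemma cfl_of_mem_locC (hSymm : Symmetric cfl)
    (hInh : ∀ e e' e'', cfl e e' → lt e' e'' → cfl e e'') {a b d d' : E} (hab : cfl a b)
    (ha : a ∈ locC lt d) (hb : b ∈ locC lt d') : cfl d d' := by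
  have had' : cfl a d' := by
    rcases hb with h | rfl
    · exact hInh a b d' hab h
    · exact hab
  rcases ha with h | rfl
  · exact hSymm (hInh d' a d (hSymm had') h)
  · exact had'

lemma exists_cfl_of_not_cflFree_union (hSymm : Symmetric cfl)
    (hloc : ∀ e, IsConfig lt cfl (locC lt e)) {d d' : E} {S T : Set E}
    (hS : S ⊆ locC lt d) (hT : T ⊆ locC lt d') (h : ¬ CflFree cfl (S ∪ T)) :
    ∃ x ∈ S, ∃ y ∈ T, cfl x y := by
  simp only [CflFree, not_forall, not_not] at h
  obtain ⟨x, hx, y, hy, hxy⟩ := h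
  rcases hx with hx | hx <;> rcases hy with hy | hy
  · exact absurd hxy ((hloc d).2 x (hS hx) y (hS hy))
  · exact ⟨x, hx, y, hy, hxy⟩
  · exact ⟨y, hy, x, hx, hSymm hxy⟩
  · exact absurd hxy ((hloc d').2 x (hT hx) y (hT hy))

lemma exists_smaller_cfl_of_not_immCfl (hSymm : Symmetric cfl)
    (hloc : ∀ e, IsConfig lt cfl (locC lt e)) {d d' : E} (hc : cfl d d')
    (hnot : ¬ ImmCfl lt cfl d d') :
    ∃ x y, cfl x y ∧ ((lt x d ∧ y ∈ locC lt d') ∨ (x ∈ locC lt d ∧ lt y d')) := by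
  have hhist : ∀ e, histSet lt e ⊆ locC lt e := fun _ _ h => Or.inl h
  rcases not_and_or.mp fun h => hnot ⟨hc, h⟩ with h | h
  · obtain ⟨x, hx, y, hy, hxy⟩ :=
      exists_cfl_of_not_cflFree_union hSymm hloc (hhist d) subset_rfl h
    exact ⟨x, y, hxy, Or.inl ⟨hx, hy⟩⟩
  · obtain ⟨x, hx, y, hy, hxy⟩ :=
      exists_cfl_of_not_cflFree_union hSymm hloc subset_rfl (hhist d') h
    exact ⟨x, y, hxy, Or.inr ⟨hx, hy⟩⟩

lemma exists_immCfl_of_cfl [Finite E] (hTrans : Transitive lt) (hIrrefl : ∀ e, ¬ lt e e)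
    (hSymm : Symmetric cfl) (hloc : ∀ e, IsConfig lt cfl (locC lt e)) {d d' : E}
    (hc : cfl d d') : ∃ a ∈ locC lt d, ∃ b ∈ locC lt d', ImmCfl lt cfl a b := by
  let P : Set (E × E) := {p | p.1 ∈ locC lt d ∧ p.2 ∈ locC lt d' ∧ cfl p.1 p.2}
  obtain ⟨⟨a, b⟩, ⟨ha, hb, hab⟩, hmin⟩ :=
    P.exists_min_image (fun p => (locC lt p.1).ncard + (locC lt p.2).ncard) P.toFinite
      ⟨(d, d'), mem_locC_self d, mem_locC_self d', hc⟩
  refine ⟨a, ha, b, hb, by_contra fun hnot => ?_⟩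
  have hsub := fun {x y : E} (h : x ∈ locC lt y) => locC_subset_of_mem hTrans h
  obtain ⟨x, y, hxy, ⟨hx, hy⟩ | ⟨hx, hy⟩⟩ :=
    exists_smaller_cfl_of_not_immCfl hSymm hloc hab hnot
  · exact (hmin (x, y) ⟨hsub ha (Or.inl hx), hsub hb hy, hxy⟩).not_gt <|
      add_lt_add_of_lt_of_le (ncard_locC_lt_ncard_of_lt hTrans hIrrefl hx)
        (ncard_locC_le_ncard_of_mem hTrans hy)
  · exact (hmin (x, y) ⟨hsub ha hx, hsub hb (Or.inl hy), hxy⟩).not_gt <|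
      add_lt_add_of_le_of_lt (ncard_locC_le_ncard_of_mem hTrans hx)
        (ncard_locC_lt_ncard_of_lt hTrans hIrrefl hy)

lemma exists_isLockMax [Finite E] {L : Type*} (hTrans : Transitive lt)
    (hIrrefl : ∀ e, ¬ lt e e) (hloc : ∀ e, IsConfig lt cfl (locC lt e)) (lab : E → Option L)
    (hlk : ∀ e e' (l : L), e ≠ e' → lab e = some l → lab e' = some l →
      lt e e' ∨ lt e' e ∨ cfl e e')
    {e b : E} {l : L} (hb : b ∈ locC lt e) (hbl : lab b = some l) :
    ∃ m, IsLockMax lt lab e l m := by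
  let S : Set E := {x | x ∈ locC lt e ∧ lab x = some l}
  obtain ⟨m, ⟨hm, hml⟩, hmax⟩ :=
    S.exists_max_image (fun x => (locC lt x).ncard) S.toFinite ⟨b, hb, hbl⟩
  refine ⟨m, hm, hml, fun a ha hal => ?_⟩
  by_cases hne : a = m
  · exact Or.inl hne
  rcases hlk a m l hne hal hml with h | h | h
  · exact Or.inr h
  · exact absurd (hmax a ⟨ha, hal⟩) (ncard_locC_lt_ncard_of_lt hTrans hIrrefl h).not_ge
  · exact absurd h ((hloc e).2 a ha m hm)

end LocalConfiguration

theorem stmt5_general {E L : Type*} [Finite E] (lt cfl : E → E → Prop)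
    (hTrans : Transitive lt) (hIrrefl : ∀ e, ¬ lt e e)
    (hSymm : Symmetric cfl)
    (hInh : ∀ e e' e'', cfl e e' → lt e' e'' → cfl e e'')
    (hloc : ∀ e, IsConfig lt cfl (locC lt e))
    (lab : E → Option L)
    (hImm : ∀ e e', ImmCfl lt cfl e e' → ∃ l : L, lab e = some l ∧ lab e' = some l)
    (hlk : ∀ e e' (l : L), e ≠ e' → lab e = some l → lab e' = some l →
      lt e e' ∨ lt e' e ∨ cfl e e')
    (e e' : E) :
    cfl e e' ↔
      ∃ (l : L) (m m' : E),
        m ∈ locC lt e ∧ lab m = some l ∧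
          (∀ a ∈ locC lt e, lab a = some l → a = m ∨ lt a m) ∧
        m' ∈ locC lt e' ∧ lab m' = some l ∧
          (∀ a ∈ locC lt e', lab a = some l → a = m' ∨ lt a m') ∧
        cfl m m' := by
  constructor
  · intro hc
    obtain ⟨a, ha, b, hb, himm⟩ := exists_immCfl_of_cfl hTrans hIrrefl hSymm hloc hc
    obtain ⟨l, hal, hbl⟩ := hImm a b himm
    obtain ⟨m, hm, hml, hmax⟩ := exists_isLockMax hTrans hIrrefl hloc lab hlk ha hal
    obtain ⟨m', hm', hml', hmax'⟩ := exists_isLockMax hTrans hIrrefl hloc lab hlk hb hbl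
    exact ⟨l, m, m', hm, hml, hmax, hm', hml', hmax',
      cfl_of_mem_locC hSymm hInh himm.1 (hmax a ha hal).symm (hmax' b hb hbl).symm⟩
  · rintro ⟨l, m, m', hm, -, -, hm', -, -, hmm'⟩
    exact cfl_of_mem_locC hSymm hInh hmm' hm hm'

/-- In a finite PES with inherited conflict where every local configuration is a
configuration, with a partial lock labelling λ such that immediately conflicting
events carry the same lock label and distinct events with the same lock label are
causally related or in conflict: e # e' iff there is a lock l such that
lmax(e, l) and lmax(e', l) are defined and lmax(e, l) # lmax(e', l),
where lmax(e, l) is the <-greatest l-labelled event in [e]. -/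
theorem stmt5 {E L : Type*} [Finite E] (lt cfl : E → E → Prop)
    (hTrans : Transitive lt) (hIrrefl : ∀ e, ¬ lt e e)
    (hSymm : Symmetric cfl) (hCIrrefl : ∀ e, ¬ cfl e e)
    (hInh : ∀ e e' e'', cfl e e' → lt e' e'' → cfl e e'')
    (hloc : ∀ e, IsConfig lt cfl (locC lt e))
    (lab : E → Option L)
    (hImm : ∀ e e', ImmCfl lt cfl e e' → ∃ l : L, lab e = some l ∧ lab e' = some l)
    (hlk : ∀ e e' (l : L), e ≠ e' → lab e = some l → lab e' = some l →
      lt e e' ∨ lt e' e ∨ cfl e e')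
    (e e' : E) :
    cfl e e' ↔
      ∃ (l : L) (m m' : E),
        m ∈ locC lt e ∧ lab m = some l ∧
          (∀ a ∈ locC lt e, lab a = some l → a = m ∨ lt a m) ∧
        m' ∈ locC lt e' ∧ lab m' = some l ∧
          (∀ a ∈ locC lt e', lab a = some l → a = m' ∨ lt a m') ∧
        cfl m m' :=
  stmt5_general lt cfl hTrans hIrrefl hSymm hInh hloc lab hImm hlk e e'
end

section
/- Let (E, <, #) be a finite prime event structure with inherited conflict in which every local configuration [e] is a configuration. If e # e' for two events e, e', then there exist events e₁ ∈ [e] and e₂ ∈ [e'] such that e₁ and e₂ are in immediate conflict. -/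
/-!
Causality is well founded on a finite structure, so pick `a ∈ [e]` minimal among the events of
`[e]` in conflict with some event of `[e']`, and then `b ∈ [e']` minimal among the events in
conflict with `a`. A conflict inside `⌈a⌉ ∪ [b]` or `[a] ∪ ⌈b⌉` cannot lie within one local
configuration, and by inherited conflict it would give a conflict with `b` below `a`, or with `a`
below `b`, contradicting minimality.
-/

section ImmediateConflict

variable {E : Type*} {lt cfl : E → E → Prop}

theorem mem_locC_of_lt (hTrans : Transitive lt) {a x y : E} (hx : x ∈ locC lt a)
    (hy : lt y x) : y ∈ locC lt a := by
  rcases hx with hxa | rfl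
  · exact Or.inl (hTrans hy hxa)
  · exact Or.inl hy

theorem cfl_of_cfl_of_mem_locC (hInh : ∀ e e' e'', cfl e e' → lt e' e'' → cfl e e'')
    {x y b : E} (hc : cfl x y) (hy : y ∈ locC lt b) : cfl x b := by
  rcases hy with hyb | rfl
  · exact hInh x y b hc hyb
  · exact hc

theorem exists_minimal_cfl_pair (hTrans : Transitive lt) (wf : WellFounded lt) {e e' : E}
    (h : cfl e e') :
    ∃ a ∈ locC lt e, ∃ b ∈ locC lt e', cfl a b ∧
      (∀ x, lt x a → ¬ cfl x b) ∧ ∀ y, lt y b → ¬ cfl a y := by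
  obtain ⟨a, ⟨ha, b₀, hb₀, hab₀⟩, hmina⟩ :=
    wf.has_min {a | a ∈ locC lt e ∧ ∃ b ∈ locC lt e', cfl a b}
      ⟨e, Or.inr rfl, e', Or.inr rfl, h⟩
  obtain ⟨b, ⟨hb, hab⟩, hminb⟩ :=
    wf.has_min {b | b ∈ locC lt e' ∧ cfl a b} ⟨b₀, hb₀, hab₀⟩
  refine ⟨a, ha, b, hb, hab, fun x hx hxb => ?_, fun y hy hay => ?_⟩
  · exact hmina x ⟨mem_locC_of_lt hTrans ha hx, b, hb, hxb⟩ hx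
  · exact hminb y ⟨mem_locC_of_lt hTrans hb hy, hay⟩ hy

theorem cflFree_histSet_union_locC (hSymm : Symmetric cfl)
    (hInh : ∀ e e' e'', cfl e e' → lt e' e'' → cfl e e'')
    (hfree : ∀ e, CflFree cfl (locC lt e)) {a b : E} (hmin : ∀ x, lt x a → ¬ cfl x b) :
    CflFree cfl (histSet lt a ∪ locC lt b) := by
  rintro u (hu | hu) v (hv | hv) huv
  · exact hfree a u (Or.inl hu) v (Or.inl hv) huv
  · exact hmin u hu (cfl_of_cfl_of_mem_locC hInh huv hv)
  · exact hmin v hv (cfl_of_cfl_of_mem_locC hInh (hSymm huv) hu)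
  · exact hfree b u hu v hv huv

theorem immCfl_of_minimal (hSymm : Symmetric cfl)
    (hInh : ∀ e e' e'', cfl e e' → lt e' e'' → cfl e e'')
    (hfree : ∀ e, CflFree cfl (locC lt e)) {a b : E} (hab : cfl a b)
    (hmina : ∀ x, lt x a → ¬ cfl x b) (hminb : ∀ y, lt y b → ¬ cfl a y) :
    ImmCfl lt cfl a b := by
  refine ⟨hab, cflFree_histSet_union_locC hSymm hInh hfree hmina, ?_⟩
  rw [Set.union_comm]
  intro u hu v hv huv
  exact cflFree_histSet_union_locC hSymm hInh hfree (fun y hy hya => hminb y hy (hSymm hya))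
    v hv u hu (hSymm huv)

end ImmediateConflict

theorem stmt6_general {E : Type*} [Finite E] (lt cfl : E → E → Prop)
    (hTrans : Transitive lt) (hIrrefl : ∀ e, ¬ lt e e)
    (hSymm : Symmetric cfl)
    (hInh : ∀ e e' e'', cfl e e' → lt e' e'' → cfl e e'')
    (hloc : ∀ e, IsConfig lt cfl (locC lt e))
    (e e' : E) (h : cfl e e') :
    ∃ e₁ ∈ locC lt e, ∃ e₂ ∈ locC lt e', ImmCfl lt cfl e₁ e₂ := by
  have : IsTrans E lt := ⟨hTrans⟩
  have : Std.Irrefl lt := ⟨hIrrefl⟩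
  obtain ⟨a, ha, b, hb, hab, hmina, hminb⟩ :=
    exists_minimal_cfl_pair hTrans (Finite.wellFounded_of_trans_of_irrefl lt) h
  exact ⟨a, ha, b, hb, immCfl_of_minimal hSymm hInh (fun e => (hloc e).2) hab hmina hminb⟩

/-- In a finite PES with inherited conflict in which every local configuration is
a configuration, if e # e' then some e₁ ∈ [e] and e₂ ∈ [e'] are in immediate
conflict. -/
theorem stmt6 {E : Type*} [Finite E] (lt cfl : E → E → Prop)
    (hTrans : Transitive lt) (hIrrefl : ∀ e, ¬ lt e e)
    (hSymm : Symmetric cfl) (hCIrrefl : ∀ e, ¬ cfl e e)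
    (hInh : ∀ e e' e'', cfl e e' → lt e' e'' → cfl e e'')
    (hloc : ∀ e, IsConfig lt cfl (locC lt e))
    (e e' : E) (h : cfl e e') :
    ∃ e₁ ∈ locC lt e, ∃ e₂ ∈ locC lt e', ImmCfl lt cfl e₁ e₂ :=
  stmt6_general lt cfl hTrans hIrrefl hSymm hInh hloc e e' h
end

section
/- Let φ be a CNF formula with clauses c₁, …, c_m over Boolean variables v₁, …, v_n in which no variable occurs both positively and negatively in the same clause. Define a prime event structure as follows. Its events are: t_i and f_i for each variable v_i; r_{i,j} for each pair (i, j) such that v_i occurs in clause c_j; and d_j for each clause c_j. Causality is the strict partial order generated by: t_i < r_{i,j} whenever v_i occurs positively in c_j, and f_i < r_{i,j} whenever v_i occurs negatively in c_j. Conflict is the smallest symmetric relation # satisfying: t_i # f_i for every i; any two distinct events of the set {d_j} ∪ {r_{i,j} : v_i occurs in c_j} are in conflict, for every j; and e # e' together with e' < e'' implies e # e''. Let U be the set of all events and D := {d₁, …, d_m}. Then φ is satisfiable if and only if there exists an alternative J to D after the empty configuration in U. -/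
/-- A clue to D after C in U: a configuration J ⊆ U such that C ∪ J is a
configuration and D ∩ J = ∅. -/
def Clue {E : Type*} (lt cfl : E → E → Prop) (U C D J : Set E) : Prop :=
  IsConfig lt cfl J ∧ J ⊆ U ∧ IsConfig lt cfl (C ∪ J) ∧ D ∩ J = ∅

/-- An alternative to D after C in U: a clue J such that every event of D is in
conflict with some event of J. -/
def AltTo {E : Type*} (lt cfl : E → E → Prop) (U C D J : Set E) : Prop :=
  Clue lt cfl U C D J ∧ ∀ e ∈ D, ∃ e' ∈ J, cfl e e'

/-- Events: t_i and f_i for each variable, r_{i,j} for each variable/clause pair,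
and d_j for each clause. -/
inductive Ev11 (n m : ℕ) where
  | t : Fin n → Ev11 n m
  | f : Fin n → Ev11 n m
  | r : Fin n → Fin m → Ev11 n m
  | d : Fin m → Ev11 n m

/-- Causality: t_i < r_{i,j} whenever v_i occurs positively in c_j, and
f_i < r_{i,j} whenever v_i occurs negatively in c_j. -/
def lt11 {n m : ℕ} (pos neg : Fin m → Finset (Fin n)) :
    Ev11 n m → Ev11 n m → Prop
  | .t i, .r i' j => i = i' ∧ i ∈ pos j
  | .f i, .r i' j => i = i' ∧ i ∈ neg j
  | _, _ => False

/-- Membership in the clause set {d_j} ∪ {r_{i,j} : v_i occurs in c_j}. -/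
def inClause11 {n m : ℕ} (pos neg : Fin m → Finset (Fin n)) (j : Fin m) :
    Ev11 n m → Prop
  | .d j' => j' = j
  | .r i j' => j' = j ∧ (i ∈ pos j ∨ i ∈ neg j)
  | _ => False

/-- Conflict: the smallest symmetric relation such that t_i # f_i, any two
distinct events of a clause set are in conflict, and conflict is inherited
along causality. -/
inductive cfl11 {n m : ℕ} (pos neg : Fin m → Finset (Fin n)) :
    Ev11 n m → Ev11 n m → Prop where
  | tf (i : Fin n) : cfl11 pos neg (.t i) (.f i)
  | clause (j : Fin m) (e e' : Ev11 n m) :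
      inClause11 pos neg j e → inClause11 pos neg j e' → e ≠ e' →
        cfl11 pos neg e e'
  | symm {e e' : Ev11 n m} : cfl11 pos neg e e' → cfl11 pos neg e' e
  | inherit {e e' e'' : Ev11 n m} :
      cfl11 pos neg e e' → lt11 pos neg e' e'' → cfl11 pos neg e e''

/-- The set U of all events of the PES: all t_i, f_i, d_j, and those r_{i,j}
such that v_i occurs in clause c_j. -/
def U11 {n m : ℕ} (pos neg : Fin m → Finset (Fin n)) : Set (Ev11 n m) :=
  {e | match e with
       | .r i j => i ∈ pos j ∨ i ∈ neg j
       | _ => True}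

/-!
A satisfying assignment `a` yields the alternative consisting of the events `t_i` or `f_i` chosen
by `a` together with one event `r_{i,j}` per clause, where `v_i` is a literal of `c_j` made true
by `a`; each `d_j` conflicts with its `r_{i,j}`. Conversely, inheritance only moves conflicts to
the causal future, and `r`, `d` have none, so `d_j` conflicts exactly with the events `r_{i,j}` of
its clause. An alternative thus contains some `r_{i,j}` for every clause, hence its cause `t_i` or
`f_i`, and reading off `v_i := (t_i ∈ J)` satisfies every clause.
-/

namespace Ev11

variable {n m : ℕ} {pos neg : Fin m → Finset (Fin n)}

lemma not_lt11_of_inClause11 {j : Fin m} {e e' : Ev11 n m} (he : inClause11 pos neg j e) :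
    ¬ lt11 pos neg e e' := by
  cases e <;> cases e' <;> simp_all [inClause11, lt11]

lemma inClause11_of_cfl11_d {j : Fin m} {e : Ev11 n m} (h : cfl11 pos neg (.d j) e) :
    inClause11 pos neg j e ∧ e ≠ .d j := by
  suffices ∀ e₁ e₂, cfl11 pos neg e₁ e₂ → ∀ j,
      (e₁ = .d j → inClause11 pos neg j e₂ ∧ e₂ ≠ .d j) ∧
        (e₂ = .d j → inClause11 pos neg j e₁ ∧ e₁ ≠ .d j) from
    (this _ _ h j).1 rfl
  intro e₁ e₂ h
  induction h with
  | tf i => simp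
  | clause j₀ e e' he he' hne =>
    intro j
    constructor
    · rintro rfl
      obtain rfl : j = j₀ := he
      exact ⟨he', hne.symm⟩
    · rintro rfl
      obtain rfl : j = j₀ := he'
      exact ⟨he, hne⟩
  | symm _ ih => exact fun j => (ih j).symm
  | inherit _ hlt ih =>
    refine fun j => ⟨fun he => absurd hlt (not_lt11_of_inClause11 ((ih j).1 he).1), ?_⟩
    rintro rfl
    cases ‹Ev11 n m› <;> simp [lt11] at hlt

/-- Inherited conflicts come from events that a causally closed set also contains. -/
lemma isConfig_of_causallyClosed {C : Set (Ev11 n m)}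
    (hclosed : ∀ e ∈ C, ∀ e', lt11 pos neg e' e → e' ∈ C)
    (htf : ∀ i, .t i ∈ C → .f i ∉ C)
    (hclause : ∀ j, ∀ e ∈ C, ∀ e' ∈ C,
      inClause11 pos neg j e → inClause11 pos neg j e' → e = e') :
    IsConfig (lt11 pos neg) (cfl11 pos neg) C := by
  refine ⟨hclosed, fun e he e' he' h => ?_⟩
  induction h with
  | tf i => exact htf i he he'
  | clause j e e' hj hj' hne => exact hne (hclause j e he e' he' hj hj')
  | symm _ ih => exact ih he' he
  | inherit _ hlt ih => exact ih he (hclosed _ he' _ hlt)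

def assignmentConfig (a : Fin n → Bool) (w : Fin m → Fin n) : Set (Ev11 n m) := fun e =>
  match e with
  | .t i => a i = true
  | .f i => a i = false
  | .r i j => i = w j
  | .d _ => False

lemma altTo_assignmentConfig (hdisj : ∀ j i, ¬ (i ∈ pos j ∧ i ∈ neg j))
    (a : Fin n → Bool) (w : Fin m → Fin n)
    (hw : ∀ j, (w j ∈ pos j ∧ a (w j) = true) ∨ (w j ∈ neg j ∧ a (w j) = false)) :
    AltTo (lt11 pos neg) (cfl11 pos neg) (U11 pos neg) ∅
      {e | ∃ j : Fin m, e = d j} (assignmentConfig a w) := by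
  have hocc : ∀ j, w j ∈ pos j ∨ w j ∈ neg j := fun j => (hw j).imp And.left And.left
  have hpos : ∀ j, w j ∈ pos j → a (w j) = true := fun j hp =>
    (hw j).elim And.right fun hn => absurd ⟨hp, hn.1⟩ (hdisj j _)
  have hneg : ∀ j, w j ∈ neg j → a (w j) = false := fun j hn =>
    (hw j).elim (fun hp => absurd ⟨hp.1, hn⟩ (hdisj j _)) And.right
  have hclause : ∀ j, ∀ e ∈ assignmentConfig a w, inClause11 pos neg j e → e = .r (w j) j := by
    rintro j (_ | _ | ⟨i, j'⟩ | _) he hj <;> simp only [inClause11] at hj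
    · obtain ⟨rfl, -⟩ := hj
      obtain rfl : i = w j' := he
      rfl
    · exact False.elim he
  have hconf : IsConfig (lt11 pos neg) (cfl11 pos neg) (assignmentConfig a w) := by
    refine isConfig_of_causallyClosed ?_ ?_ ?_
    · rintro (_ | _ | ⟨i, j⟩ | _) he e' hlt <;> cases e' <;> simp only [lt11] at hlt
      · obtain ⟨rfl, hi⟩ := hlt
        obtain rfl : _ = w j := he
        exact hpos j hi
      · obtain ⟨rfl, hi⟩ := hlt
        obtain rfl : _ = w j := he
        exact hneg j hi
    · intro i (ht : a i = true) (hf : a i = false)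
      simp [ht] at hf
    · exact fun j e he e' he' hj hj' => (hclause j e he hj).trans (hclause j e' he' hj').symm
  refine ⟨⟨hconf, ?_, by rwa [Set.empty_union], ?_⟩, ?_⟩
  · rintro (_ | _ | i | _) he <;> try trivial
    obtain rfl : i = w _ := he
    exact hocc _
  · refine Set.eq_empty_iff_forall_notMem.2 ?_
    rintro _ ⟨⟨j, rfl⟩, he⟩
    exact he
  · rintro _ ⟨j, rfl⟩
    exact ⟨.r (w j) j, rfl, .clause j _ _ rfl ⟨rfl, hocc j⟩ (by simp)⟩

lemma clause_satisfied_of_cfl11_d {J : Set (Ev11 n m)} (hJ : IsConfig (lt11 pos neg) (cfl11 pos neg) J)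
    (halt : ∀ j, ∃ e ∈ J, cfl11 pos neg (.d j) e) (j : Fin m) :
    (∃ i ∈ pos j, t i ∈ J) ∨ (∃ i ∈ neg j, t i ∉ J) := by
  obtain ⟨e, heJ, hcfl⟩ := halt j
  obtain ⟨hj, hne⟩ := inClause11_of_cfl11_d hcfl
  rcases e with _ | _ | ⟨i, j'⟩ | j' <;> simp only [inClause11] at hj
  · obtain ⟨rfl, hp | hn⟩ := hj
    · exact .inl ⟨i, hp, hJ.1 _ heJ (.t i) ⟨rfl, hp⟩⟩
    · have hf : f i ∈ J := hJ.1 _ heJ (.f i) ⟨rfl, hn⟩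
      exact .inr ⟨i, hn, fun ht => hJ.2 _ ht _ hf (.tf i)⟩
  · exact absurd (congrArg d hj) hne

end Ev11

/-- A CNF formula φ in which no variable occurs both positively and negatively
in the same clause is satisfiable iff there exists an alternative J to
D = {d₁, …, d_m} after the empty configuration in U. -/
theorem stmt11 {n m : ℕ} (pos neg : Fin m → Finset (Fin n))
    (hdisj : ∀ j i, ¬ (i ∈ pos j ∧ i ∈ neg j)) :
    (∃ a : Fin n → Bool, ∀ j : Fin m,
        (∃ i ∈ pos j, a i = true) ∨ (∃ i ∈ neg j, a i = false)) ↔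
      ∃ J : Set (Ev11 n m),
        AltTo (lt11 pos neg) (cfl11 pos neg) (U11 pos neg) ∅
          {e | ∃ j : Fin m, e = Ev11.d j} J := by
  constructor
  · rintro ⟨a, ha⟩
    have hlit : ∀ j, ∃ i, (i ∈ pos j ∧ a i = true) ∨ (i ∈ neg j ∧ a i = false) := fun j =>
      (ha j).elim (fun ⟨i, hi, h⟩ => ⟨i, .inl ⟨hi, h⟩⟩) (fun ⟨i, hi, h⟩ => ⟨i, .inr ⟨hi, h⟩⟩)
    choose w hw using hlit
    exact ⟨_, Ev11.altTo_assignmentConfig hdisj a w hw⟩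
  · rintro ⟨J, ⟨hJ, -, -, -⟩, halt⟩
    classical
    refine ⟨fun i => decide (Ev11.t i ∈ J), fun j => ?_⟩
    simpa using Ev11.clause_satisfied_of_cfl11_d hJ (fun j => halt _ ⟨j, rfl⟩) j
end

section
/- Let φ be a CNF formula with clauses c₁, …, c_m over Boolean variables v₁, …, v_n in which no variable occurs both positively and negatively in the same clause. Define the Petri net N_φ as follows. Places: s_i and s'_i for each variable v_i, and d_j for each clause c_j. Transitions: p_i and n_i for each variable v_i, and one further transition t. Flow: pre(p_i) = {s_i} and post(p_i) = {s'_i} ∪ {d_j : v_i occurs positively in c_j}; pre(n_i) = {s'_i} ∪ {d_j : v_i occurs positively in c_j} and post(n_i) = {d_j : v_i occurs negatively in c_j}; pre(t) = {d₁, …, d_m} and post(t) = ∅. The initial marking m₀ puts one token on each s_i and no token elsewhere. Then φ is satisfiable if and only if there is a reachable marking of N_φ at which the transition t is enabled. -/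
/-- Places of the Petri net N_φ: s_i and s'_i for each variable v_i,
and d_j for each clause c_j. -/
inductive Pl12 (n m : ℕ) where
  | s : Fin n → Pl12 n m
  | s' : Fin n → Pl12 n m
  | d : Fin m → Pl12 n m

/-- Transitions of N_φ: p_i and n_i for each variable v_i, and t. -/
inductive Tr12 (n m : ℕ) where
  | p : Fin n → Tr12 n m
  | neg : Fin n → Tr12 n m
  | t : Tr12 n m

/-- Presets: pre(p_i) = {s_i}; pre(n_i) = {s'_i} ∪ {d_j : v_i occurs positively
in c_j}; pre(t) = {d₁, …, d_m}. -/
def pre12 {n m : ℕ} (pos : Fin m → Finset (Fin n)) : Tr12 n m → Set (Pl12 n m)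
  | .p i => {Pl12.s i}
  | .neg i => {Pl12.s' i} ∪ {q | ∃ j, q = Pl12.d j ∧ i ∈ pos j}
  | .t => {q | ∃ j, q = Pl12.d j}

/-- Postsets: post(p_i) = {s'_i} ∪ {d_j : v_i occurs positively in c_j};
post(n_i) = {d_j : v_i occurs negatively in c_j}; post(t) = ∅. -/
def post12 {n m : ℕ} (pos neg : Fin m → Finset (Fin n)) :
    Tr12 n m → Set (Pl12 n m)
  | .p i => {Pl12.s' i} ∪ {q | ∃ j, q = Pl12.d j ∧ i ∈ pos j}
  | .neg i => {q | ∃ j, q = Pl12.d j ∧ i ∈ neg j}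
  | .t => ∅

/-- A transition with the given preset is enabled at a marking. -/
def enabled12 {P : Type*} (pre : Set P) (mk : P → ℕ) : Prop :=
  ∀ q ∈ pre, 1 ≤ mk q

open Classical in
/-- Firing a transition with given preset and postset at a marking. -/
noncomputable def fire12 {P : Type*} (pre post : Set P) (mk : P → ℕ) : P → ℕ :=
  fun q => mk q - (if q ∈ pre then 1 else 0) + (if q ∈ post then 1 else 0)

/-- One firing step of N_φ between markings. -/
def step12 {n m : ℕ} (pos neg : Fin m → Finset (Fin n))
    (mk mk' : Pl12 n m → ℕ) : Prop :=
  ∃ tr : Tr12 n m, enabled12 (pre12 pos tr) mk ∧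
    mk' = fire12 (pre12 pos tr) (post12 pos neg tr) mk

/-- The initial marking: one token on each s_i, no token elsewhere. -/
def m012 {n m : ℕ} : Pl12 n m → ℕ
  | .s _ => 1
  | _ => 0

/-!
A partial assignment `σ` (with `σ i = none` for an unassigned variable) determines the marking
with a token on `s_i` iff `v_i` is unassigned, on `s'_i` iff `v_i` is true, and with as many
tokens on `d_j` as `c_j` has literals made true by `σ`. Firing `p_i` makes an unassigned `v_i`
true and firing `n_i` then makes it false, so all these markings are reachable. Conversely, every
reachable marking lies below one of them: firing is monotone in the marking, and `t` only removes
tokens. So `t` is enabled at a reachable marking iff some assignment satisfies every clause.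
-/

open Finset Function

theorem Finset.card_filter_comp_update_add {ι α : Type*} [DecidableEq ι] (s : Finset ι)
    (p : α → Prop) [DecidablePred p] (σ : ι → α) (i : ι) (v : α) :
    #{k ∈ s | p (update σ i v k)} + (if i ∈ s ∧ p (σ i) then 1 else 0) =
      #{k ∈ s | p (σ k)} + (if i ∈ s ∧ p v then 1 else 0) := by
  simp only [card_filter]
  by_cases hi : i ∈ s
  · have hupd : ∀ k, (if p (update σ i v k) then 1 else 0) =
        update (fun k => if p (σ k) then 1 else 0) i (if p v then 1 else 0) k := fun k => by
      by_cases hk : k = i <;> simp [hk]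
    rw [sum_congr rfl fun k _ => hupd k, sum_update_of_mem hi,
      sum_eq_add_sum_sdiff_singleton_of_mem hi]
    simp only [hi, true_and]
    ring
  · simp only [hi, false_and, if_false, add_zero]
    exact sum_congr rfl fun k hk => by rw [update_of_ne (ne_of_mem_of_not_mem hk hi)]

section PetriNet

variable {P : Type*}

theorem enabled12_mono {pre : Set P} {mk M : P → ℕ} (h : enabled12 pre mk) (hle : mk ≤ M) :
    enabled12 pre M :=
  fun q hq => (h q hq).trans (hle q)

theorem fire12_mono (pre post : Set P) {mk M : P → ℕ} (hle : mk ≤ M) :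
    fire12 pre post mk ≤ fire12 pre post M :=
  fun q => by simp only [fire12]; gcongr; exact hle q

theorem fire12_empty_le (pre : Set P) (mk : P → ℕ) : fire12 pre ∅ mk ≤ mk :=
  fun q => by simp [fire12]

end PetriNet

section AssignmentMarking

variable {n m : ℕ} (pos neg : Fin m → Finset (Fin n))

def assignmentMarking (σ : Fin n → Option Bool) : Pl12 n m → ℕ
  | .s i => if σ i = none then 1 else 0
  | .s' i => if σ i = some true then 1 else 0
  | .d j => #{k ∈ pos j | σ k = some true} + #{k ∈ neg j | σ k = some false}

theorem assignmentMarking_none : assignmentMarking pos neg (fun _ => none) = m012 := by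
  funext q; cases q <;> simp [assignmentMarking, m012]

variable {pos neg}

theorem fire12_p_assignmentMarking {σ : Fin n → Option Bool} {i : Fin n} (hi : σ i = none) :
    fire12 (pre12 pos (.p i)) (post12 pos neg (.p i)) (assignmentMarking pos neg σ) =
      assignmentMarking pos neg (update σ i (some true)) := by
  funext q
  cases q with
  | s k => by_cases hk : k = i <;> simp [fire12, pre12, post12, assignmentMarking, hk, hi]
  | s' k => by_cases hk : k = i <;> simp [fire12, pre12, post12, assignmentMarking, hk, hi]
  | d j =>
    have hpos := card_filter_comp_update_add (pos j) (· = some true) σ i (some true)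
    have hneg := card_filter_comp_update_add (neg j) (· = some false) σ i (some true)
    simp only [fire12, pre12, post12, assignmentMarking, hi, Set.mem_union, Set.mem_singleton_iff,
      Set.mem_ofPred_eq, Pl12.d.injEq, reduceCtorEq, exists_eq_left', false_or, and_true,
      and_false, Option.some.injEq, Bool.true_eq_false, reduceIte] at hpos hneg ⊢
    split_ifs at hpos hneg ⊢ <;> omega

theorem fire12_neg_assignmentMarking {σ : Fin n → Option Bool} {i : Fin n}
    (hi : σ i = some true) :
    fire12 (pre12 pos (.neg i)) (post12 pos neg (.neg i)) (assignmentMarking pos neg σ) =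
      assignmentMarking pos neg (update σ i (some false)) := by
  funext q
  cases q with
  | s k => by_cases hk : k = i <;> simp [fire12, pre12, post12, assignmentMarking, hk, hi]
  | s' k => by_cases hk : k = i <;> simp [fire12, pre12, post12, assignmentMarking, hk, hi]
  | d j =>
    have hpos := card_filter_comp_update_add (pos j) (· = some true) σ i (some false)
    have hneg := card_filter_comp_update_add (neg j) (· = some false) σ i (some false)
    simp only [fire12, pre12, post12, assignmentMarking, hi, Set.mem_union, Set.mem_singleton_iff,
      Set.mem_ofPred_eq, Pl12.d.injEq, reduceCtorEq, exists_eq_left', false_or, and_true,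
      and_false, Option.some.injEq, Bool.true_eq_false, Bool.false_eq_true, reduceIte] at hpos hneg ⊢
    split_ifs at hpos hneg ⊢ <;> omega

theorem enabled12_p_assignmentMarking_iff {σ : Fin n → Option Bool} {i : Fin n} :
    enabled12 (pre12 pos (.p i)) (assignmentMarking pos neg σ) ↔ σ i = none := by
  by_cases hi : σ i = none <;> simp [enabled12, pre12, assignmentMarking, hi]

theorem enabled12_neg_assignmentMarking_iff {σ : Fin n → Option Bool} {i : Fin n} :
    enabled12 (pre12 pos (.neg i)) (assignmentMarking pos neg σ) ↔ σ i = some true := by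
  refine ⟨fun h => by_contra fun hi => ?_, fun hi => ?_⟩
  · simpa [assignmentMarking, hi] using h (.s' i) (.inl rfl)
  rintro q (rfl | ⟨j, rfl, hij⟩)
  · simp [assignmentMarking, hi]
  · have : 0 < #{k ∈ pos j | σ k = some true} := card_pos.2 ⟨i, mem_filter.2 ⟨hij, hi⟩⟩
    simp only [assignmentMarking]
    omega

theorem one_le_assignmentMarking_d_iff {σ : Fin n → Option Bool} {j : Fin m} :
    1 ≤ assignmentMarking pos neg σ (.d j) ↔
      (∃ i ∈ pos j, σ i = some true) ∨ (∃ i ∈ neg j, σ i = some false) := by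
  simp only [assignmentMarking, Nat.one_le_iff_ne_zero, ne_eq, Nat.add_eq_zero_iff, not_and_or,
    card_eq_zero, ← nonempty_iff_ne_empty, filter_nonempty_iff]

theorem enabled12_t_assignmentMarking_iff {σ : Fin n → Option Bool} :
    enabled12 (pre12 pos .t) (assignmentMarking pos neg σ) ↔
      ∀ j, (∃ i ∈ pos j, σ i = some true) ∨ (∃ i ∈ neg j, σ i = some false) :=
  ⟨fun h j => one_le_assignmentMarking_d_iff.1 (h _ ⟨j, rfl⟩),
    fun h _ ⟨j, hq⟩ => hq ▸ one_le_assignmentMarking_d_iff.2 (h j)⟩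

theorem reflTransGen_assignmentMarking_update {σ : Fin n → Option Bool} {i : Fin n}
    (hi : σ i = none) (v : Option Bool) :
    Relation.ReflTransGen (step12 pos neg) (assignmentMarking pos neg σ)
      (assignmentMarking pos neg (update σ i v)) := by
  have hp : step12 pos neg (assignmentMarking pos neg σ)
      (assignmentMarking pos neg (update σ i (some true))) :=
    ⟨.p i, enabled12_p_assignmentMarking_iff.2 hi, (fire12_p_assignmentMarking hi).symm⟩
  rcases v with _ | _ | _
  · rw [← hi, update_eq_self]
  · have hn : step12 pos neg (assignmentMarking pos neg (update σ i (some true)))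
        (assignmentMarking pos neg (update σ i (some false))) := by
      have hi' : update σ i (some true) i = some true := update_self ..
      refine ⟨.neg i, enabled12_neg_assignmentMarking_iff.2 hi', ?_⟩
      rw [fire12_neg_assignmentMarking hi', update_idem]
    exact .tail (.single hp) hn
  · exact .single hp

theorem reflTransGen_assignmentMarking (σ : Fin n → Option Bool) :
    Relation.ReflTransGen (step12 pos neg) m012 (assignmentMarking pos neg σ) := by
  suffices ∀ S : Finset (Fin n), Relation.ReflTransGen (step12 pos neg) m012
      (assignmentMarking pos neg fun k => if k ∈ S then σ k else none) by
    simpa using this univ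
  intro S
  induction S using Finset.induction with
  | empty => simpa [assignmentMarking_none] using .refl
  | @insert i S hi ih =>
    have hupd : (fun k => if k ∈ insert i S then σ k else none) =
        update (fun k => if k ∈ S then σ k else none) i (σ i) := by
      funext k; by_cases hk : k = i <;> simp [hk, hi]
    rw [hupd]
    exact ih.trans (reflTransGen_assignmentMarking_update (by simp [hi]) _)

theorem exists_le_assignmentMarking {mk : Pl12 n m → ℕ}
    (h : Relation.ReflTransGen (step12 pos neg) m012 mk) :
    ∃ σ, mk ≤ assignmentMarking pos neg σ := by
  induction h with
  | refl => exact ⟨fun _ => none, (assignmentMarking_none pos neg).ge⟩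
  | tail _ hstep ih =>
    obtain ⟨tr, hen, rfl⟩ := hstep
    obtain ⟨σ, hle⟩ := ih
    cases tr with
    | p i =>
      have hi := enabled12_p_assignmentMarking_iff.1 (enabled12_mono hen hle)
      exact ⟨_, (fire12_mono _ _ hle).trans_eq (fire12_p_assignmentMarking hi)⟩
    | neg i =>
      have hi := enabled12_neg_assignmentMarking_iff.1 (enabled12_mono hen hle)
      exact ⟨_, (fire12_mono _ _ hle).trans_eq (fire12_neg_assignmentMarking hi)⟩
    | t => exact ⟨σ, (fire12_empty_le _ _).trans hle⟩

end AssignmentMarking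

theorem stmt12_general {n m : ℕ} (pos neg : Fin m → Finset (Fin n)) :
    (∃ a : Fin n → Bool, ∀ j : Fin m,
        (∃ i ∈ pos j, a i = true) ∨ (∃ i ∈ neg j, a i = false)) ↔
      ∃ mk : Pl12 n m → ℕ,
        Relation.ReflTransGen (step12 pos neg) m012 mk ∧
        enabled12 (pre12 pos Tr12.t) mk := by
  constructor
  · rintro ⟨a, ha⟩
    refine ⟨assignmentMarking pos neg (some ∘ a), reflTransGen_assignmentMarking _,
      enabled12_t_assignmentMarking_iff.2 ?_⟩
    simpa using ha
  · rintro ⟨mk, hreach, hen⟩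
    obtain ⟨σ, hle⟩ := exists_le_assignmentMarking hreach
    refine ⟨fun i => σ i = some true, fun j => ?_⟩
    rcases enabled12_t_assignmentMarking_iff.1 (enabled12_mono hen hle) j with
      ⟨i, hi, hσi⟩ | ⟨i, hi, hσi⟩
    · exact .inl ⟨i, hi, by simp [hσi]⟩
    · exact .inr ⟨i, hi, by simp [hσi]⟩

/-- A CNF formula φ in which no variable occurs both positively and negatively in
the same clause is satisfiable iff some reachable marking of N_φ enables t. -/
theorem stmt12 {n m : ℕ} (pos neg : Fin m → Finset (Fin n))
    (hdisj : ∀ j i, ¬ (i ∈ pos j ∧ i ∈ neg j)) :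
    (∃ a : Fin n → Bool, ∀ j : Fin m,
        (∃ i ∈ pos j, a i = true) ∨ (∃ i ∈ neg j, a i = false)) ↔
      ∃ mk : Pl12 n m → ℕ,
        Relation.ReflTransGen (step12 pos neg) m012 mk ∧
        enabled12 (pre12 pos Tr12.t) mk :=
  stmt12_general pos neg
end

section
/- Let s ≥ 2 and let g ≤ d be natural numbers. Then there exist m ≤ 2·s·(log_s(d) + 1) (where log_s denotes the natural-number base-s logarithm) and a strictly decreasing sequence d = c₀ > c₁ > … > c_m = g of natural numbers such that for every i < m, either c_{i+1} = c_i − 1, or there is some j ≥ 1 such that s^j divides c_i and c_{i+1} = c_i − s^j. -/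
/-!
Round `d` down and `g` up to multiples of `s`, using at most `s - 1` unit steps at each end.
Between two multiples `s * D` and `s * G` every step of a path from `D` to `G` scales to a
legal step (a unit step becomes a jump by `s`, a jump by `s ^ j` one by `s ^ (j + 1)`), and
`D - G` is smaller than `d - g` by a factor `s`. So each power of `s` in `d - g` costs at most
`2 (s - 1)` steps.
-/

def SkipStep (s a b : ℕ) : Prop :=
  b < a ∧ (b = a - 1 ∨ ∃ j, 1 ≤ j ∧ s ^ j ∣ a ∧ b = a - s ^ j)

inductive SkipPath (s : ℕ) : ℕ → ℕ → ℕ → Prop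
  | refl (a : ℕ) : SkipPath s 0 a a
  | cons {n a b c : ℕ} : SkipStep s a b → SkipPath s n b c → SkipPath s (n + 1) a c

theorem SkipStep.mul_left {s a b : ℕ} (hs : 0 < s) (h : SkipStep s a b) :
    SkipStep s (s * a) (s * b) := by
  obtain ⟨hlt, hunit | ⟨j, hj, hdvd, rfl⟩⟩ := h
  · refine ⟨Nat.mul_lt_mul_of_pos_left hlt hs, Or.inr ⟨1, le_rfl, ?_, ?_⟩⟩
    · simp
    · rw [hunit, Nat.mul_sub, mul_one, pow_one]
  · refine ⟨Nat.mul_lt_mul_of_pos_left hlt hs, Or.inr ⟨j + 1, by omega, ?_, ?_⟩⟩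
    · rw [pow_succ']
      exact mul_dvd_mul_left s hdvd
    · rw [Nat.mul_sub, pow_succ']

namespace SkipPath

variable {s : ℕ}

theorem trans {m n a b c : ℕ} (h₁ : SkipPath s m a b) (h₂ : SkipPath s n b c) :
    SkipPath s (m + n) a c := by
  induction h₁ with
  | refl => simpa using h₂
  | cons hstep _ ih => rw [Nat.add_right_comm]; exact cons hstep (ih h₂)

theorem mul_left (hs : 0 < s) {n a b : ℕ} (h : SkipPath s n a b) :
    SkipPath s n (s * a) (s * b) := by
  induction h with
  | refl a => exact refl _
  | cons hstep _ ih => exact cons (hstep.mul_left hs) ih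

theorem of_le {a b : ℕ} (h : b ≤ a) : SkipPath s (a - b) a b := by
  induction a with
  | zero => simpa [Nat.le_zero.mp h] using refl 0
  | succ a ih =>
    rcases h.eq_or_lt with rfl | hlt
    · simpa using refl _
    · rw [Nat.succ_sub (Nat.le_of_lt_succ hlt)]
      exact cons ⟨Nat.lt_succ_self a, Or.inl rfl⟩ (ih (Nat.le_of_lt_succ hlt))

theorem exists_seq {n a b : ℕ} (h : SkipPath s n a b) :
    ∃ c : ℕ → ℕ, c 0 = a ∧ c n = b ∧ ∀ i < n, SkipStep s (c i) (c (i + 1)) := by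
  induction h with
  | refl a => exact ⟨fun _ => a, rfl, rfl, by simp⟩
  | @cons _ a _ _ hstep _ ih =>
    obtain ⟨c, hc0, hcn, hc⟩ := ih
    refine ⟨fun | 0 => a | i + 1 => c i, rfl, hcn, fun i hi => ?_⟩
    cases i with
    | zero => simpa [hc0] using hstep
    | succ i => exact hc i (by omega)

end SkipPath

theorem exists_skipPath_of_sub_lt_pow {s : ℕ} (hs : 1 < s) (k : ℕ) {d g : ℕ} (hgd : g ≤ d)
    (hdg : d - g < s ^ (k + 1)) : ∃ n ≤ (2 * k + 1) * (s - 1), SkipPath s n d g := by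
  induction k generalizing d g with
  | zero => exact ⟨d - g, by simpa using Nat.le_sub_one_of_lt hdg, SkipPath.of_le hgd⟩
  | succ k ih =>
    by_cases hnear : d - g < s
    · exact ⟨d - g, le_trans (by omega) (Nat.le_mul_of_pos_left _ (by omega)),
        SkipPath.of_le hgd⟩
    set D := d / s
    set G := (g + s - 1) / s
    have hd : s * D + d % s = d := Nat.div_add_mod d s
    have hg : s * G + (g + s - 1) % s = g + s - 1 := Nat.div_add_mod _ s
    have hdmod : d % s < s := Nat.mod_lt _ (by omega)
    have hgmod : (g + s - 1) % s < s := Nat.mod_lt _ (by omega)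
    have hGD : G ≤ D := Nat.div_le_div_right (by omega)
    have hDG : D - G < s ^ (k + 1) := by
      refine Nat.lt_of_mul_lt_mul_left (a := s) ?_
      rw [Nat.mul_sub, ← pow_succ']
      omega
    obtain ⟨n, hn, hpath⟩ := ih hGD hDG
    have hpath' := ((SkipPath.of_le (s := s) (show s * D ≤ d by omega)).trans
      (hpath.mul_left (by omega))).trans (SkipPath.of_le (show g ≤ s * G by omega))
    refine ⟨_, ?_, hpath'⟩
    have hcount :
        (2 * (k + 1) + 1) * (s - 1) = (s - 1) + (2 * k + 1) * (s - 1) + (s - 1) := by ring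
    omega

/-- Skip-list traversal bound: for s ≥ 2 and g ≤ d there are
m ≤ 2·s·(log_s(d) + 1) and a strictly decreasing sequence
d = c₀ > c₁ > … > c_m = g such that each step either decreases by 1 or
jumps from c_i down by s^j for some j ≥ 1 with s^j ∣ c_i. -/
theorem stmt15 (s g d : ℕ) (hs : 2 ≤ s) (hgd : g ≤ d) :
    ∃ m ≤ 2 * s * (Nat.log s d + 1), ∃ c : ℕ → ℕ,
      c 0 = d ∧ c m = g ∧ (∀ i < m, c (i + 1) < c i) ∧
      ∀ i < m, c (i + 1) = c i - 1 ∨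
        ∃ j, 1 ≤ j ∧ s ^ j ∣ c i ∧ c (i + 1) = c i - s ^ j := by
  have hlog : d - g < s ^ (Nat.log s d + 1) :=
    (Nat.sub_le d g).trans_lt (Nat.lt_pow_succ_log_self hs d)
  obtain ⟨m, hm, hpath⟩ := exists_skipPath_of_sub_lt_pow hs _ hgd hlog
  obtain ⟨c, hc0, hcm, hstep⟩ := hpath.exists_seq
  have hbound : (2 * Nat.log s d + 1) * (s - 1) ≤ 2 * s * (Nat.log s d + 1) :=
    calc (2 * Nat.log s d + 1) * (s - 1) ≤ (2 * Nat.log s d + 2) * s :=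
          Nat.mul_le_mul (by omega) (by omega)
      _ = 2 * s * (Nat.log s d + 1) := by ring
  exact ⟨m, hm.trans hbound, c, hc0, hcm, fun i hi => (hstep i hi).1,
    fun i hi => (hstep i hi).2⟩
end
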